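/- Equivalence of the head-reduction abstract machine and the small-step head semantics: for lambda terms v, v', the machine starting from ⟨v | tp⟩ reaches a stuck command c whose readback is v' if and only if v head-reduces (in many steps) to the head normal form v'. -/
import Mathlib


/-- Untyped lambda terms with de Bruijn indices. -/
inductive Tm : Type
  | var : Nat → Tm
  | app : Tm → Tm → Tm
  | lam : Tm → Tm
deriving DecidableEq

/-- Shift free indices ≥ d up by one. -/
def lift (d : Nat) : Tm → Tm
  | .var n => if n < d then .var n else .var (n + 1)
  | .app a b => .app (lift d a) (lift d b)
  | .lam a => .lam (lift (d + 1) a)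

/-- Capture-avoiding substitution of `u` for index `k`. -/
def subst (u : Tm) (k : Nat) : Tm → Tm
  | .var n => if n = k then u else if k < n then .var (n - 1) else .var n
  | .app a b => .app (subst u k a) (subst u k b)
  | .lam a => .lam (subst (lift 0 u) (k + 1) a)

/-- Small-step weak-head (call-by-name) reduction: E[(λx.v)v'] ↦ E[v[v'/x]], E ::= □ | E v. -/
inductive Wh : Tm → Tm → Prop
  | beta (a b : Tm) : Wh (.app (.lam a) b) (subst b 0 a)
  | appL {a a' : Tm} (b : Tm) : Wh a a' → Wh (.app a b) (.app a' b)

/-- Neutral terms N ::= x | N v. -/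
inductive Neutral : Tm → Prop
  | var (n : Nat) : Neutral (.var n)
  | app {a : Tm} (b : Tm) : Neutral a → Neutral (.app a b)

/-- Weak-head normal forms: WHNF ::= N | λx.v. -/
inductive Whnf : Tm → Prop
  | neutral {a : Tm} : Neutral a → Whnf a
  | lam (a : Tm) : Whnf (.lam a)

/-- Head normal forms: HNF ::= N | λx.HNF. -/
inductive Hnf : Tm → Prop
  | neutral {a : Tm} : Neutral a → Hnf a
  | lam {a : Tm} : Hnf a → Hnf (.lam a)

/-- Small-step head reduction: S[(λx.v)v'] ↦ S[v[v'/x]], S ::= E | λx.S, E ::= □ | E v. -/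
inductive Hd : Tm → Tm → Prop
  | wh {a a' : Tm} : Wh a a' → Hd a a'
  | lam {a a' : Tm} : Hd a a' → Hd (.lam a) (.lam a')

/-- Full beta reduction (contraction in any context). -/
inductive Beta : Tm → Tm → Prop
  | beta (a b : Tm) : Beta (.app (.lam a) b) (subst b 0 a)
  | appL {a a' : Tm} (b : Tm) : Beta a a' → Beta (.app a b) (.app a' b)
  | appR {b b' : Tm} (a : Tm) : Beta b b' → Beta (.app a b) (.app a b')
  | lam {a a' : Tm} : Beta a a' → Beta (.lam a) (.lam a')

/-- Big-step weak-head evaluation. -/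
inductive BigWh : Tm → Tm → Prop
  | var (n : Nat) : BigWh (.var n) (.var n)
  | lam (a : Tm) : BigWh (.lam a) (.lam a)
  | beta {a a' b v : Tm} : BigWh a (.lam a') → BigWh (subst b 0 a') v → BigWh (.app a b) v
  | neu {a a' : Tm} (b : Tm) : BigWh a a' → (∀ t, a' ≠ .lam t) → BigWh (.app a b) (.app a' b)

/-- Big-step head evaluation, derived from weak-head evaluation. -/
inductive BigH : Tm → Tm → Prop
  | lam {v a a' : Tm} : BigWh v (.lam a) → BigH a a' → BigH v (.lam a')
  | notlam {v v' : Tm} : BigWh v v' → (∀ t, v' ≠ .lam t) → BigH v v'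

/-- Sestoft's big-step semantics for head reduction. -/
inductive Sf : Tm → Tm → Prop
  | var (n : Nat) : Sf (.var n) (.var n)
  | lam {a a' : Tm} : Sf a a' → Sf (.lam a) (.lam a')
  | neu {a a' : Tm} (b : Tm) : BigWh a a' → (∀ t, a' ≠ .lam t) → Sf (.app a b) (.app a' b)
  | beta {a a' b v : Tm} : BigWh a (.lam a') → Sf (subst b 0 a') v → Sf (.app a b) v

/-- Krivine machine: co-terms are lists of terms ([] = tp, (· :: ·) = call stack push). -/
abbrev KCmd := Tm × List Tm

/-- Krivine machine steps. -/
inductive KStep : KCmd → KCmd → Prop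
  | push (a b : Tm) (E : List Tm) : KStep (.app a b, E) (a, b :: E)
  | grab (a b : Tm) (E : List Tm) : KStep (.lam a, b :: E) (subst b 0 a, E)

/-- Readback/plugging of a Krivine command: plug⟨v | v'·E⟩ = plug⟨v v' | E⟩, plug⟨v | tp⟩ = v. -/
def plug : Tm → List Tm → Tm
  | v, [] => v
  | v, b :: E => plug (.app v b) E

/-- n-fold lambda abstraction: nLam n v = λ…λ.v with n lambdas. -/
def nLam : Nat → Tm → Tm
  | 0, v => v
  | n + 1, v => .lam (nLam n v)

/-- Co-terms of the head reduction abstract machine: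
`stuck n` is n-fold Abs applied to tp, `cons` pushes an argument. -/
inductive HCo : Type
  | stuck : Nat → HCo
  | cons : Tm → HCo → HCo

abbrev HCmd := Tm × HCo

/-- Head reduction abstract machine steps. -/
inductive HStep : HCmd → HCmd → Prop
  | push (a b : Tm) (E : HCo) : HStep (.app a b, E) (a, .cons b E)
  | grab (a b : Tm) (E : HCo) : HStep (.lam a, .cons b E) (subst b 0 a, E)
  | under (a : Tm) (n : Nat) : HStep (.lam a, .stuck n) (a, .stuck (n + 1))

/-- Readback of the head machine: ⟨v | v'·E⟩ ⇝ ⟨v v' | E⟩, ⟨v | Abs S⟩ ⇝ ⟨λ.v | S⟩, ⟨v | tp⟩ ⇝ v. -/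
def hread : Tm → HCo → Tm
  | v, .stuck n => nLam n v
  | v, .cons b E => hread (.app v b) E

/-- One readback step on head-machine commands. -/
inductive RStep : HCmd → HCmd → Prop
  | cons (v b : Tm) (E : HCo) : RStep (v, .cons b E) (.app v b, E)
  | abs (v : Tm) (n : Nat) : RStep (v, .stuck (n + 1)) (.lam v, .stuck n)

/-- Chains of exactly n readback steps. -/
inductive RStepN : Nat → HCmd → HCmd → Prop
  | refl (c : HCmd) : RStepN 0 c c
  | step {n : Nat} {c c' c'' : HCmd} : RStep c c' → RStepN n c' c'' → RStepN (n + 1) c c''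

/-- Length of a head-machine co-term: constructors above tp. -/
def colen : HCo → Nat
  | .stuck n => n
  | .cons _ E => colen E + 1

/-- All free indices are below k. -/
def ClosedUnder : Nat → Tm → Prop
  | k, .var n => n < k
  | k, .app a b => ClosedUnder k a ∧ ClosedUnder k b
  | k, .lam a => ClosedUnder (k + 1) a

/-- Eta-expansion relation: t is the eta-expansion of f. -/
def EtaExp (t f : Tm) : Prop := t = .lam (.app (lift 0 f) (.var 0))


/-! ### Auxiliary lemmas -/

lemma nLam_lam (m : Nat) (a : Tm) : nLam m (.lam a) = nLam (m + 1) a := by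
  induction m with
  | zero => rfl
  | succ k ih => simp [nLam, ih]

lemma hd_nLam {t t' : Tm} (n : Nat) (h : Hd t t') : Hd (nLam n t) (nLam n t') := by
  induction n with
  | zero => exact h
  | succ k ih => exact Hd.lam ih

lemma wh_hd_hread {t t' : Tm} (E : HCo) (w : Wh t t') : Hd (hread t E) (hread t' E) := by
  induction E generalizing t t' with
  | stuck n => exact hd_nLam n (Hd.wh w)
  | cons b E ih => exact ih (Wh.appL b w)

lemma neutral_no_wh {t t' : Tm} (h : Neutral t) (w : Wh t t') : False := by
  induction w with
  | beta a b => cases h with | app _ hn => cases hn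
  | appL b _ ih => cases h with | app _ hn => exact ih hn

lemma wh_det {t a b : Tm} (h1 : Wh t a) (h2 : Wh t b) : a = b := by
  induction h1 generalizing b with
  | beta => cases h2 with
    | beta => rfl
    | appL _ w => cases w
  | appL c w ih => cases h2 with
    | beta => cases w
    | appL _ w2 => rw [ih w2]

lemma hd_det {t a b : Tm} (h1 : Hd t a) (h2 : Hd t b) : a = b := by
  induction h1 generalizing b with
  | wh w => cases h2 with
    | wh w2 => exact wh_det w w2
    | lam _ => cases w
  | lam h ih => cases h2 with
    | wh w2 => cases w2
    | lam h2 => rw [ih h2]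

lemma hnf_no_hd {t t' : Tm} (h : Hnf t) (s : Hd t t') : False := by
  induction h generalizing t' with
  | neutral hn => cases s with
    | wh w => exact neutral_no_wh hn w
    | lam _ => cases hn
  | lam _ ih => cases s with
    | wh w => cases w
    | lam s' => exact ih s'

lemma hnf_nLam {t : Tm} (n : Nat) (h : Hnf t) : Hnf (nLam n t) := by
  induction n with
  | zero => exact h
  | succ k ih => exact Hnf.lam ih

lemma neutral_hnf_hread {t : Tm} (E : HCo) (h : Neutral t) : Hnf (hread t E) := by
  induction E generalizing t with
  | stuck n => exact hnf_nLam n (Hnf.neutral h)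
  | cons b E ih => exact ih (Neutral.app b h)

/-- n-step chains of head reduction. -/
inductive HdN : Nat → Tm → Tm → Prop
  | refl (t : Tm) : HdN 0 t t
  | step {n : Nat} {t t' t'' : Tm} : Hd t t' → HdN n t' t'' → HdN (n + 1) t t''

lemma hdn_tail {n : Nat} {a b c : Tm} (h : HdN n a b) (s : Hd b c) : HdN (n + 1) a c := by
  induction h with
  | refl => exact HdN.step s (HdN.refl _)
  | step s' _ ih => exact HdN.step s' (ih s)

lemma hdn_of_rtg {a b : Tm} (h : Relation.ReflTransGen Hd a b) : ∃ n, HdN n a b := by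
  induction h with
  | refl => exact ⟨0, HdN.refl _⟩
  | tail _ s ih => obtain ⟨n, hn⟩ := ih; exact ⟨n + 1, hdn_tail hn s⟩

lemma hstep_hread {c c' : HCmd} (s : HStep c c') :
    Relation.ReflTransGen Hd (hread c.1 c.2) (hread c'.1 c'.2) := by
  cases s with
  | push a b E => exact Relation.ReflTransGen.refl
  | grab a b E => exact Relation.ReflTransGen.single (wh_hd_hread E (Wh.beta a b))
  | under a n =>
      show Relation.ReflTransGen Hd (nLam n (.lam a)) (nLam (n + 1) a)
      rw [nLam_lam]

lemma hsteps_hread {c c' : HCmd} (s : Relation.ReflTransGen HStep c c') :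
    Relation.ReflTransGen Hd (hread c.1 c.2) (hread c'.1 c'.2) := by
  induction s with
  | refl => exact Relation.ReflTransGen.refl
  | tail _ st ih => exact ih.trans (hstep_hread st)

lemma stuck_var {c : HCmd} (h : ∀ c', ¬ HStep c c') : ∃ n, c.1 = .var n := by
  obtain ⟨t, E⟩ := c
  match t, E with
  | .var n, _ => exact ⟨n, rfl⟩
  | .app a b, E => exact ((h _ (HStep.push a b E)).elim)
  | .lam a, .cons b E => exact ((h _ (HStep.grab a b E)).elim)
  | .lam a, .stuck n => exact ((h _ (HStep.under a n)).elim)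

lemma back : ∀ (n : Nat) (t : Tm) (E : HCo) (v' : Tm), HdN n (hread t E) v' → Hnf v' →
    ∃ c : HCmd, Relation.ReflTransGen HStep (t, E) c ∧ (∀ c', ¬ HStep c c') ∧ hread c.1 c.2 = v' := by
  intro n
  induction n with
  | zero =>
    intro t
    induction t with
    | var m =>
      intro E v' h hn
      refine ⟨(.var m, E), Relation.ReflTransGen.refl, ?_, ?_⟩
      · intro c' s; cases s
      · cases h; rfl
    | app a b iha ihb =>
      intro E v' h hn
      obtain ⟨c, hc1, hc2, hc3⟩ := iha (.cons b E) v' h hn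
      exact ⟨c, Relation.ReflTransGen.head (HStep.push a b E) hc1, hc2, hc3⟩
    | lam a iha =>
      intro E v' h hn
      match E with
      | .stuck m =>
        have h' : HdN 0 (hread a (.stuck (m + 1))) v' := by
          show HdN 0 (nLam (m + 1) a) v'
          rw [← nLam_lam]; exact h
        obtain ⟨c, hc1, hc2, hc3⟩ := iha (.stuck (m + 1)) v' h' hn
        exact ⟨c, Relation.ReflTransGen.head (HStep.under a m) hc1, hc2, hc3⟩
      | .cons b E' =>
        cases h
        exact (hnf_no_hd hn (wh_hd_hread E' (Wh.beta a b))).elim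
  | succ k ihk =>
    intro t
    induction t with
    | var m =>
      intro E v' h hn
      cases h with
      | step s _ => exact (hnf_no_hd (neutral_hnf_hread E (Neutral.var m)) s).elim
    | app a b iha ihb =>
      intro E v' h hn
      obtain ⟨c, hc1, hc2, hc3⟩ := iha (.cons b E) v' h hn
      exact ⟨c, Relation.ReflTransGen.head (HStep.push a b E) hc1, hc2, hc3⟩
    | lam a iha =>
      intro E v' h hn
      match E with
      | .stuck m =>
        have h' : HdN (k + 1) (hread a (.stuck (m + 1))) v' := by
          show HdN (k + 1) (nLam (m + 1) a) v'
          rw [← nLam_lam]; exact h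
        obtain ⟨c, hc1, hc2, hc3⟩ := iha (.stuck (m + 1)) v' h' hn
        exact ⟨c, Relation.ReflTransGen.head (HStep.under a m) hc1, hc2, hc3⟩
      | .cons b E' =>
        cases h with
        | step s hrest =>
          have hd2 := wh_hd_hread E' (Wh.beta a b)
          have heq := hd_det s hd2
          rw [heq] at hrest
          obtain ⟨c, hc1, hc2, hc3⟩ := ihk (subst b 0 a) E' v' hrest hn
          exact ⟨c, Relation.ReflTransGen.head (HStep.grab a b E') hc1, hc2, hc3⟩

theorem head_machine_equiv (v v' : Tm) :
    (∃ c : HCmd, Relation.ReflTransGen HStep (v, .stuck 0) c ∧ (∀ c', ¬ HStep c c') ∧ hread c.1 c.2 = v') ↔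
    (Relation.ReflTransGen Hd v v' ∧ Hnf v') := by
  constructor
  · rintro ⟨c, hr, hstuck, hre⟩
    have h1 := hsteps_hread hr
    obtain ⟨n, hn⟩ := stuck_var hstuck
    have hnf : Hnf (hread c.1 c.2) := by rw [hn]; exact neutral_hnf_hread c.2 (Neutral.var n)
    rw [hre] at h1 hnf
    exact ⟨h1, hnf⟩
  · rintro ⟨hr, hnf⟩
    obtain ⟨n, hchain⟩ := hdn_of_rtg hr
    exact back n v (.stuck 0) v' hchain hnf
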